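/- There is a constant C depending only on α > 2 such that: for every finite set R of at least two points in the Euclidean plane ℝ² and every set S of links obtained by arbitrarily orienting the edges of a minimum spanning tree of R, every link i ∈ S satisfies Σ_{j ∈ S, j ≠ i, l_j ≥ l_i} min{1, l_i^α / d(i,j)^α} ≤ C. -/

import Mathlib

noncomputable section

open scoped BigOperators

abbrev Pt : Type := EuclideanSpace ℝ (Fin 2)

instance : DecidableEq Pt := Classical.decEq _

abbrev Link : Type := Pt × Pt

def len (i : Link) : ℝ := dist i.1 i.2

def dd (i j : Link) : ℝ :=
  min (min (dist i.1 j.1) (dist i.1 j.2)) (min (dist i.2 j.1) (dist i.2 j.2))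

def PFeasible (α β : ℝ) (S : Finset Link) (P : Link → ℝ) : Prop :=
  (∀ i ∈ S, 0 < P i) ∧
  ∀ i ∈ S, β * ∑ j ∈ S.erase i, P j / dist j.1 i.2 ^ α ≤ P i / len i ^ α

def Feasible (α β : ℝ) (S : Finset Link) : Prop := ∃ P, PFeasible α β S P

def oblPower (α τ : ℝ) : Link → ℝ := fun i => len i ^ (τ * α)

def linkDiversity (S : Finset Link) : ℝ :=
  if h : S.Nonempty then S.sup' h len / S.inf' h len else 1

def logStar (x : ℝ) : ℕ := sInf {k : ℕ | (Real.logb 2)^[k] x ≤ 1}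

def IsSpanningTreeLinks (R : Finset Pt) (S : Finset Link) : Prop :=
  (∀ i ∈ S, i.1 ∈ R ∧ i.2 ∈ R ∧ i.1 ≠ i.2) ∧
  S.card + 1 = R.card ∧
  (SimpleGraph.fromRel fun x y : {p : Pt // p ∈ R} => ((x : Pt), (y : Pt)) ∈ S).Connected

def IsMSTLinks (R : Finset Pt) (S : Finset Link) : Prop :=
  IsSpanningTreeLinks R S ∧
  ∀ S' : Finset Link, IsSpanningTreeLinks R S' → ∑ i ∈ S, len i ≤ ∑ i ∈ S', len i

def emb (t : ℝ) : Pt := (WithLp.equiv 2 (Fin 2 → ℝ)).symm ![t, 0]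

def NodeDisjoint (i j : Link) : Prop :=
  i.1 ≠ j.1 ∧ i.1 ≠ j.2 ∧ i.2 ≠ j.1 ∧ i.2 ≠ j.2

def ptDiversity (R : Finset ℝ) : ℝ :=
  if h : R.offDiag.Nonempty then
    (R.offDiag.sup' h fun p => |p.1 - p.2|) / (R.offDiag.inf' h fun p => |p.1 - p.2|)
  else 1

def G1 (T : Finset Link) : SimpleGraph {i : Link // i ∈ T} :=
  SimpleGraph.fromRel fun i j => dd ↑i ↑j ≤ min (len ↑i) (len ↑j)

/-!
Fix a link `i` of length `ℓ` and sort the links `j` with `len j ≥ ℓ` into shells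
`k ≤ dd i j / ℓ < k + 1`. A link of shell `k` contributes at most `max 1 k ^ (-α)`, so it
suffices that shell `k` holds `O(k + 1)` links: `∑ (k + 1) k ^ (-α)` converges for `α > 2`.

On each such link mark the point at distance `ℓ / 2` from its endpoint nearer to `i`. The
exchange property of a minimum spanning tree (an edge is a shortest edge across the cut it
defines) keeps the marked points of distinct edges `ℓ / 8` apart: edges with a common vertex
meet at an angle of at least `π / 3`, and for disjoint edges it suffices to know on which
side of each edge the other one lies. The marked points of shell `k` lie in an annulus around
`i.1` of area `O((k + 1) ℓ²)`, and comparing areas bounds their number.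
-/

open Finset Metric
open scoped RealInnerProductSpace

section InnerProduct

variable {E : Type*} [NormedAddCommGroup E] [InnerProductSpace ℝ E]

lemma two_inner_le_mul_norm_of_le_norm_sub {x y : E} (hx : ‖x‖ ≤ ‖x - y‖) (hy : ‖y‖ ≤ ‖x - y‖) :
    2 * ⟪x, y⟫ ≤ ‖x‖ * ‖y‖ := by
  have hexp := norm_sub_sq_real x y
  rcases le_total ‖x‖ ‖y‖ with h | h <;>
    nlinarith [norm_nonneg x, norm_nonneg y, norm_nonneg (x - y)]

lemma le_norm_sub_of_two_inner_le {x y : E} (h : 2 * ⟪x, y⟫ ≤ ‖x‖ * ‖y‖) {s : ℝ} (hs : 0 ≤ s)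
    (hx : s ≤ ‖x‖) (hy : s ≤ ‖y‖) : s ≤ ‖x - y‖ := by
  have hexp := norm_sub_sq_real x y
  have hsq : s ^ 2 ≤ ‖x - y‖ ^ 2 := by
    nlinarith [mul_le_mul hx hy hs (norm_nonneg x), sq_nonneg (‖x‖ - ‖y‖)]
  exact (pow_le_pow_iff_left₀ hs (norm_nonneg _) two_ne_zero).1 hsq

lemma two_inner_smul_le_of_two_inner_le {x y : E} (h : 2 * ⟪x, y⟫ ≤ ‖x‖ * ‖y‖) {t u : ℝ}
    (ht : 0 ≤ t) (hu : 0 ≤ u) : 2 * ⟪t • x, u • y⟫ ≤ ‖t • x‖ * ‖u • y‖ := by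
  rw [real_inner_smul_left, real_inner_smul_right, norm_smul, norm_smul, Real.norm_of_nonneg ht,
    Real.norm_of_nonneg hu]
  nlinarith [mul_nonneg ht hu]

def stepToward (a b : E) (s : ℝ) : E := a + (s / dist a b) • (b - a)

lemma exists_stepToward_eq {a b : E} {s : ℝ} (hs : 0 < s) (hab : 2 * s ≤ dist a b) :
    ∃ (w : E) (l : ℝ), 2 ≤ l ∧ ‖w‖ = s ∧ b = a + l • w ∧ stepToward a b s = a + w := by
  have hD : dist a b ≠ 0 := (by linarith : 0 < dist a b).ne'
  refine ⟨(s / dist a b) • (b - a), dist a b / s, (le_div_iff₀ hs).2 (by linarith), ?_, ?_, rfl⟩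
  · rw [norm_smul, Real.norm_of_nonneg (by positivity), ← dist_eq_norm', div_mul_cancel₀ _ hD]
  · rw [smul_smul, div_mul_div_cancel₀ hs.ne', div_self hD, one_smul, add_sub_cancel]

lemma dist_stepToward_left {a b : E} {s : ℝ} (hs : 0 < s) (hab : 2 * s ≤ dist a b) :
    dist (stepToward a b s) a = s := by
  obtain ⟨w, l, -, hw, -, hp⟩ := exists_stepToward_eq hs hab
  rw [hp, dist_self_add_left, hw]

lemma exists_stepToward_sub_eq_smul {a b z c : E} (h : (a = z ∧ b = c) ∨ (a = c ∧ b = z))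
    {s : ℝ} (hs : 0 < s) (hab : 2 * s ≤ dist a b) :
    ∃ t : ℝ, 0 ≤ t ∧ stepToward a b s - z = t • (c - z) ∧ s ≤ ‖stepToward a b s - z‖ := by
  have hD : 0 < dist a b := by linarith [dist_nonneg (x := a) (y := b)]
  rcases h with ⟨rfl, rfl⟩ | ⟨rfl, rfl⟩
  · refine ⟨s / dist a b, by positivity, add_sub_cancel_left _ _, ?_⟩
    rw [stepToward, add_sub_cancel_left, norm_smul, Real.norm_of_nonneg (by positivity),
      ← dist_eq_norm', div_mul_cancel₀ _ hD.ne']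
  · have hst : stepToward a b s - b = (1 - s / dist a b) • (a - b) := by
      rw [stepToward]; module
    have ht : s / dist a b ≤ 1 / 2 := by rw [div_le_iff₀ hD]; linarith
    refine ⟨1 - s / dist a b, by linarith, hst, ?_⟩
    rw [hst, norm_smul, Real.norm_of_nonneg (by linarith), ← dist_eq_norm, sub_mul,
      div_mul_cancel₀ _ hD.ne']
    linarith

end InnerProduct

lemma norm_smul_sq_of_norm_eq {E : Type*} [SeminormedAddCommGroup E] [NormedSpace ℝ E] (a : ℝ)
    {w : E} {s : ℝ} (hw : ‖w‖ = s) :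
    ‖a • w‖ ^ 2 = a ^ 2 * s ^ 2 := by
  rw [norm_smul, Real.norm_eq_abs, mul_pow, sq_abs, hw]

lemma sub_sq_le_norm_sq_of_le_norm_add {E : Type*} [SeminormedAddCommGroup E] {v q : E} {c : ℝ}
    (h : c ≤ ‖v + q‖) (hq : ‖q‖ ≤ c) :
    (c - ‖q‖) ^ 2 ≤ ‖v‖ ^ 2 :=
  pow_le_pow_left₀ (by linarith) (by linarith [norm_add_le v q]) 2

section StepSeparation

variable {E : Type*} [NormedAddCommGroup E] [InnerProductSpace ℝ E]

/- Normal form of two edges `(a, a + l • w₁)` and `(a + d, a + d + m • w₂)` with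
`‖w₁‖ = ‖w₂‖ = s`, whose step points `a + w₁` and `a + d + w₂` are `‖d + w₂ - w₁‖` apart.
The hypotheses are what the cut property gives; in `step_sep_xy`, `x` records on which side
of the first edge (that of `a` or of `b`) the second one lies, and `y` the converse. -/
lemma step_sep_ab {s l m : ℝ} (hs : 0 < s) (hl : 2 ≤ l) (hm : 2 ≤ m) {d w₁ w₂ : E}
    (hw₁ : ‖w₁‖ = s) (hw₂ : ‖w₂‖ = s) (h₁ : l * s ≤ ‖d - l • w₁‖) (h₂ : m * s ≤ ‖d‖) :
    s / 4 ≤ ‖d + w₂ - w₁‖ := by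
  by_contra! hx
  set x := ‖d + w₂ - w₁‖
  have hx₀ : 0 ≤ x := norm_nonneg _
  set J := ⟪w₁, w₂⟫
  have hJ₂ : (2 * s - x) ^ 2 ≤ 2 * s ^ 2 - 2 * J := by
    have := sub_sq_le_norm_sq_of_le_norm_add (v := w₁ - w₂) (c := 2 * s)
      (by rw [show w₁ - w₂ + (d + w₂ - w₁) = d by abel]; nlinarith) (by linarith)
    rw [norm_sub_sq_real, hw₁, hw₂] at this
    linarith
  have hJ₁ : (l * s - x) ^ 2 ≤ (l - 1) ^ 2 * s ^ 2 + 2 * (l - 1) * J + s ^ 2 := by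
    have := sub_sq_le_norm_sq_of_le_norm_add (v := -((l - 1) • w₁ + w₂)) (c := l * s)
      (by rwa [show -((l - 1) • w₁ + w₂) + (d + w₂ - w₁) = d - l • w₁ by module]) (by nlinarith)
    rw [norm_neg, norm_add_sq_real, norm_smul_sq_of_norm_eq _ hw₁, real_inner_smul_left,
      hw₂] at this
    linarith
  have key : (l - 1) * (2 * s - x) ^ 2 ≤ 2 * l * s * x - x ^ 2 := by
    nlinarith [mul_le_mul_of_nonneg_left hJ₂ (by linarith : (0 : ℝ) ≤ l - 1)]
  nlinarith [mul_nonneg (by linarith : (0 : ℝ) ≤ l - 2)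
      (mul_nonneg hs.le (by linarith : 0 ≤ s - 4 * x)),
    mul_nonneg (by linarith : (0 : ℝ) ≤ l - 2) (mul_pos hs hs).le,
    mul_pos hs (by linarith : 0 < s - 4 * x), mul_pos hs hs, sq_nonneg x,
    mul_nonneg (by linarith : (0 : ℝ) ≤ l - 2) (sq_nonneg x)]

lemma step_sep_bb {s l m : ℝ} (hs : 0 < s) (hl : 2 ≤ l) (hm : 2 ≤ m) {d w₁ w₂ : E}
    (hw₁ : ‖w₁‖ = s) (hw₂ : ‖w₂‖ = s) (h₁ : m * s ≤ ‖d‖) (h₂ : l * s ≤ ‖d + m • w₂‖) :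
    s / 4 ≤ ‖d + w₂ - w₁‖ := by
  by_contra! hx
  set x := ‖d + w₂ - w₁‖
  have hx₀ : 0 ≤ x := norm_nonneg _
  set J := ⟪w₁, w₂⟫
  have hd : d = w₁ - w₂ + (d + w₂ - w₁) := by abel
  have hmx : m * s ≤ x + 2 * s := by
    have := norm_add_le (w₁ - w₂) (d + w₂ - w₁)
    rw [← hd] at this
    linarith [norm_sub_le w₁ w₂]
  have hJ₂ : (m * s - x) ^ 2 ≤ 2 * s ^ 2 - 2 * J := by
    have := sub_sq_le_norm_sq_of_le_norm_add (v := w₁ - w₂) (c := m * s)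
      (by rwa [← hd]) (by nlinarith)
    rw [norm_sub_sq_real, hw₁, hw₂] at this
    linarith
  have hJ₁ : (l * s - x) ^ 2 ≤ s ^ 2 + 2 * (m - 1) * J + (m - 1) ^ 2 * s ^ 2 := by
    have := sub_sq_le_norm_sq_of_le_norm_add (v := w₁ + (m - 1) • w₂) (c := l * s)
      (by rwa [show w₁ + (m - 1) • w₂ + (d + w₂ - w₁) = d + m • w₂ by module]) (by nlinarith)
    rw [norm_add_sq_real, norm_smul_sq_of_norm_eq _ hw₂, real_inner_smul_right, hw₁] at this
    linarith
  have key : (l * s - x) ^ 2 + (m - 1) * (m * s - x) ^ 2 ≤ m ^ 2 * s ^ 2 := by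
    nlinarith [mul_le_mul_of_nonneg_left hJ₂ (by linarith : (0 : ℝ) ≤ m - 1)]
  have k₁ : (2 * s - x) ^ 2 ≤ (l * s - x) ^ 2 := pow_le_pow_left₀ (by linarith) (by nlinarith) 2
  have k₂ : (2 * s - x) ^ 2 ≤ (m * s - x) ^ 2 := pow_le_pow_left₀ (by linarith) (by nlinarith) 2
  have k₃ : (m * s) ^ 2 ≤ (x + 2 * s) ^ 2 := pow_le_pow_left₀ (by positivity) hmx 2
  nlinarith [mul_nonneg (by linarith : (0 : ℝ) ≤ m - 2) (sq_nonneg (m * s - x)), mul_pos hs hs,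
    mul_pos hs (by linarith : 0 < s - 4 * x)]

lemma step_sep_aa_of_le {s l m : ℝ} (hs : 0 < s) (hm : 2 ≤ m) (hml : m ≤ l) {d w₁ w₂ : E}
    (hw₁ : ‖w₁‖ = s) (hw₂ : ‖w₂‖ = s) (h₂ : m * s ≤ ‖d + m • w₂‖)
    (h₃ : l * s ≤ ‖d + m • w₂ - l • w₁‖) : s / 4 ≤ ‖d + w₂ - w₁‖ := by
  by_contra! hx
  set x := ‖d + w₂ - w₁‖
  have hx₀ : 0 ≤ x := norm_nonneg _
  set J := ⟪w₁, w₂⟫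
  have hJ₁ : (m * s - x) ^ 2 ≤ s ^ 2 + 2 * (m - 1) * J + (m - 1) ^ 2 * s ^ 2 := by
    have := sub_sq_le_norm_sq_of_le_norm_add (v := w₁ + (m - 1) • w₂) (c := m * s)
      (by rwa [show w₁ + (m - 1) • w₂ + (d + w₂ - w₁) = d + m • w₂ by module]) (by nlinarith)
    rw [norm_add_sq_real, norm_smul_sq_of_norm_eq _ hw₂, real_inner_smul_right, hw₁] at this
    linarith
  have hJ₂ : (l * s - x) ^ 2
      ≤ (l - 1) ^ 2 * s ^ 2 - 2 * (l - 1) * (m - 1) * J + (m - 1) ^ 2 * s ^ 2 := by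
    have := sub_sq_le_norm_sq_of_le_norm_add (v := -((l - 1) • w₁ - (m - 1) • w₂))
      (c := l * s) (by
        rwa [show -((l - 1) • w₁ - (m - 1) • w₂) + (d + w₂ - w₁) = d + m • w₂ - l • w₁ by
          module]) (by nlinarith)
    rw [norm_neg, norm_sub_sq_real, norm_smul_sq_of_norm_eq _ hw₁, norm_smul_sq_of_norm_eq _ hw₂,
      real_inner_smul_left, real_inner_smul_right] at this
    linarith
  have key : (l * s - x) ^ 2 + (l - 1) * (m * s - x) ^ 2
      ≤ l * (l - 1) * s ^ 2 + l * (m - 1) ^ 2 * s ^ 2 := by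
    nlinarith [mul_le_mul_of_nonneg_left hJ₁ (by linarith : (0 : ℝ) ≤ l - 1)]
  have hlm : (0 : ℝ) ≤ l - m := by linarith
  have hm₂ : (0 : ℝ) ≤ m - 2 := by linarith
  have hl₂ : (0 : ℝ) ≤ l - 2 := by linarith
  have hsx : 0 ≤ s - 4 * x := by linarith
  nlinarith [mul_pos hs hs, sq_nonneg x, mul_nonneg hlm (mul_nonneg hs.le hsx),
    mul_nonneg hm₂ (mul_nonneg hs.le hsx), mul_nonneg (mul_nonneg hlm hm₂) (mul_pos hs hs).le,
    mul_nonneg (mul_nonneg hlm hm₂) (mul_nonneg hs.le hx₀),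
    mul_nonneg (mul_nonneg hl₂ hs.le) hx₀, mul_nonneg hl₂ (mul_pos hs hs).le,
    sq_nonneg ((l - m) * s), sq_nonneg ((m - 2) * s), mul_pos (mul_pos hs hs) (by linarith : 0 < l),
    mul_nonneg (mul_nonneg hx₀ hx₀) hl₂,
    mul_pos (mul_pos hs (by linarith : 0 < s - 2 * x)) (by linarith : 0 < l)]

lemma step_sep_aa {s l m : ℝ} (hs : 0 < s) (hl : 2 ≤ l) (hm : 2 ≤ m) {d w₁ w₂ : E}
    (hw₁ : ‖w₁‖ = s) (hw₂ : ‖w₂‖ = s) (h₁ : l * s ≤ ‖d - l • w₁‖) (h₂ : m * s ≤ ‖d + m • w₂‖)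
    (h₃ : l * s ≤ ‖d + m • w₂ - l • w₁‖) (h₄ : m * s ≤ ‖d + m • w₂ - l • w₁‖) :
    s / 4 ≤ ‖d + w₂ - w₁‖ := by
  rcases le_total m l with h | h
  · exact step_sep_aa_of_le hs hm h hw₁ hw₂ h₂ h₃
  · have := step_sep_aa_of_le (d := -d) hs hl h hw₂ hw₁
      (by rwa [show -d + l • w₁ = -(d - l • w₁) by abel, norm_neg])
      (by rwa [show -d + l • w₁ - m • w₂ = -(d + m • w₂ - l • w₁) by abel, norm_neg])
    rwa [show -d + w₁ - w₂ = -(d + w₂ - w₁) by abel, norm_neg] at this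

end StepSeparation

lemma sym2_eq_of_eq_or_eq_swap {α : Type*} {f : α × α} {a b : α} (h : f = (a, b) ∨ f = (b, a)) :
    s(f.1, f.2) = s(a, b) := by
  rcases h with rfl | rfl
  exacts [rfl, Sym2.eq_swap]

lemma card_le_two_mul_card_image_sym2 {α : Type*} [DecidableEq α] (F : Finset (α × α)) :
    F.card ≤ 2 * (F.image fun j => s(j.1, j.2)).card := by
  refine card_le_mul_card_image F 2 fun e _ => ?_
  induction e using Sym2.ind with
  | _ a b =>
    calc (F.filter fun j => s(j.1, j.2) = s(a, b)).card
          ≤ ({(a, b), (b, a)} : Finset (α × α)).card := by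
          refine card_le_card fun j hj => ?_
          rcases Sym2.eq_iff.1 (mem_filter.1 hj).2 with h | h
          · exact mem_insert.2 (Or.inl (Prod.ext h.1 h.2))
          · exact mem_insert.2 (Or.inr (mem_singleton.2 (Prod.ext h.1 h.2)))
      _ ≤ 2 := card_le_two

section Packing

open MeasureTheory Module
open scoped ENNReal

lemma card_mul_pow_le_of_pairwiseDisjoint_ball {E ι : Type*} [NormedAddCommGroup E]
    [NormedSpace ℝ E] [FiniteDimensional ℝ E] [Nontrivial E] {T : Finset ι} {p : ι → E} {r : ℝ}
    (hr : 0 ≤ r) (hdisj : (T : Set ι).PairwiseDisjoint fun i => ball (p i) r) {u : E}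
    {r₁ r₂ : ℝ} (hr₁ : 0 ≤ r₁) (hr₁₂ : r₁ ≤ r₂)
    (hsub : ∀ i ∈ T, ball (p i) r ⊆ ball u r₂ \ ball u r₁) :
    T.card * r ^ finrank ℝ E ≤ r₂ ^ finrank ℝ E - r₁ ^ finrank ℝ E := by
  borelize E
  set μ : Measure E := Measure.addHaar
  set n := finrank ℝ E
  set v := μ (ball (0 : E) 1)
  have hv₀ : v ≠ 0 := (measure_ball_pos μ _ one_pos).ne'
  have hv : v ≠ ∞ := measure_ball_lt_top.ne
  have hvol : ∀ x : E, ∀ ρ : ℝ, 0 ≤ ρ → μ (ball x ρ) = ENNReal.ofReal (ρ ^ n) * v :=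
    fun x _ hρ => Measure.addHaar_ball μ x hρ
  have hle : ENNReal.ofReal (T.card * r ^ n) * v ≤ ENNReal.ofReal (r₂ ^ n - r₁ ^ n) * v :=
    calc ENNReal.ofReal (T.card * r ^ n) * v = ∑ i ∈ T, μ (ball (p i) r) := by
          rw [sum_congr rfl fun i _ => hvol _ _ hr, sum_const, nsmul_eq_mul,
            ENNReal.ofReal_mul (by positivity), ENNReal.ofReal_natCast, mul_assoc]
      _ = μ (⋃ i ∈ T, ball (p i) r) :=
          (measure_biUnion_finset hdisj fun _ _ => measurableSet_ball).symm
      _ ≤ μ (ball u r₂ \ ball u r₁) := measure_mono (Set.iUnion₂_subset hsub)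
      _ = ENNReal.ofReal (r₂ ^ n - r₁ ^ n) * v := by
          rw [measure_sdiff (ball_subset_ball hr₁₂) measurableSet_ball.nullMeasurableSet
            measure_ball_lt_top.ne, hvol _ _ (hr₁.trans hr₁₂), hvol _ _ hr₁,
            ← ENNReal.sub_mul fun _ _ => hv, ← ENNReal.ofReal_sub _ (by positivity)]
  have hpow : r₁ ^ n ≤ r₂ ^ n := pow_le_pow_left₀ hr₁ hr₁₂ n
  exact (ENNReal.ofReal_le_ofReal_iff (by linarith)).1
    ((ENNReal.mul_le_mul_iff_left hv₀ hv).1 hle)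

end Packing

lemma sum_le_tsum_of_card_fiber_le {ι : Type*} [DecidableEq ι] (F : Finset ι) (κ : ι → ℕ)
    (f : ι → ℝ) {b c : ℕ → ℝ} (hb : ∀ k, 0 ≤ b k) (hf : ∀ j ∈ F, f j ≤ b (κ j))
    (hc : ∀ k, ((F.filter fun j => κ j = k).card : ℝ) ≤ c k)
    (hsum : Summable fun k => c k * b k) : ∑ j ∈ F, f j ≤ ∑' k, c k * b k :=
  calc ∑ j ∈ F, f j ≤ ∑ j ∈ F, b (κ j) := sum_le_sum hf
    _ = ∑ k ∈ F.image κ, ((F.filter fun j => κ j = k).card : ℝ) * b k := by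
        rw [sum_comp]; simp only [nsmul_eq_mul]
    _ ≤ ∑ k ∈ F.image κ, c k * b k := sum_le_sum fun k _ => mul_le_mul_of_nonneg_right (hc k) (hb k)
    _ ≤ ∑' k, c k * b k := hsum.sum_le_tsum _ fun k _ =>
        mul_nonneg ((Nat.cast_nonneg _).trans (hc k)) (hb k)

lemma min_one_rpow_div_rpow_le {ℓ d α : ℝ} (hℓ : 0 < ℓ) (hd : 0 ≤ d) (hα : 0 ≤ α) :
    min 1 (ℓ ^ α / d ^ α) ≤ max 1 (⌊d / ℓ⌋₊ : ℝ) ^ (-α) := by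
  rcases Nat.eq_zero_or_pos ⌊d / ℓ⌋₊ with hk | hk
  · rw [hk, Nat.cast_zero, max_eq_left zero_le_one, Real.one_rpow]
    exact min_le_left _ _
  have hk₁ : (1 : ℝ) ≤ ⌊d / ℓ⌋₊ := by exact_mod_cast hk
  have hkd : (⌊d / ℓ⌋₊ : ℝ) * ℓ ≤ d := (le_div_iff₀ hℓ).1 (Nat.floor_le (by positivity))
  have hd' : 0 < d := by nlinarith
  rw [max_eq_right hk₁, Real.rpow_neg (by linarith), ← Real.inv_rpow (by linarith),
    ← Real.div_rpow hℓ.le hd]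
  refine (min_le_right _ _).trans (Real.rpow_le_rpow (by positivity) ?_ hα)
  rw [div_le_iff₀ hd', inv_mul_eq_div, le_div_iff₀ (by linarith)]
  linarith

lemma summable_succ_mul_max_one_rpow_neg {α : ℝ} (hα : 2 < α) :
    Summable fun k : ℕ => ((k : ℝ) + 1) * max 1 (k : ℝ) ^ (-α) := by
  rw [← summable_nat_add_iff 1]
  have hmaj : Summable fun n : ℕ => 2 * ((n + 1 : ℝ) ^ (α - 1))⁻¹ := by
    refine Summable.mul_left 2 ?_
    exact_mod_cast (summable_nat_add_iff 1).2 (Real.summable_nat_rpow_inv.2 (by linarith))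
  refine Summable.of_nonneg_of_le (fun n => by positivity) (fun n => ?_) hmaj
  have hn : (1 : ℝ) ≤ n + 1 := by linarith [n.cast_nonneg (α := ℝ)]
  push_cast
  rw [max_eq_right hn, ← Real.rpow_neg (by linarith), neg_sub]
  calc ((n : ℝ) + 1 + 1) * (n + 1) ^ (-α) ≤ 2 * ((n + 1) * (n + 1) ^ (-α)) := by
        nlinarith [Real.rpow_nonneg (by linarith : (0 : ℝ) ≤ n + 1) (-α)]
    _ = 2 * (n + 1) ^ (1 - α) := by
        rw [Real.rpow_sub (by linarith), Real.rpow_one, Real.rpow_neg (by linarith)]; ring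

section SpanningTree

open SimpleGraph

variable {R : Finset Pt} {S : Finset Link}

def linkGraph (R : Finset Pt) (T : Finset Link) : SimpleGraph {p : Pt // p ∈ R} :=
  SimpleGraph.fromRel fun x y => ((x : Pt), (y : Pt)) ∈ T

lemma linkGraph_adj {T : Finset Link} {x y : {p : Pt // p ∈ R}} :
    (linkGraph R T).Adj x y ↔ x ≠ y ∧ ((↑x, ↑y) ∈ T ∨ (↑y, ↑x) ∈ T) :=
  fromRel_adj _ x y

lemma linkGraph_mono {T T' : Finset Link} (h : T ⊆ T') : linkGraph R T ≤ linkGraph R T' :=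
  fun _ _ hxy =>
    linkGraph_adj.2 ⟨(linkGraph_adj.1 hxy).1, (linkGraph_adj.1 hxy).2.imp (@h _) (@h _)⟩

lemma card_edgeSet_linkGraph_le (R : Finset Pt) (T : Finset Link) :
    Nat.card (linkGraph R T).edgeSet ≤ T.card := by
  classical
  have hmaps : ∀ e ∈ (linkGraph R T).edgeSet,
      Sym2.map Subtype.val e ∈ (T.image fun j : Link => s(j.1, j.2) : Set (Sym2 Pt)) := by
    intro e he
    induction e using Sym2.ind with
    | _ x y =>
      rcases (linkGraph_adj.1 he).2 with h | h
      · exact Finset.mem_coe.2 (Finset.mem_image.2 ⟨_, h, rfl⟩)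
      · exact Finset.mem_coe.2 (Finset.mem_image.2 ⟨_, h, Sym2.eq_swap⟩)
  calc Nat.card (linkGraph R T).edgeSet = (linkGraph R T).edgeSet.ncard := Nat.card_coe_set_eq _
    _ ≤ (T.image fun j : Link => s(j.1, j.2) : Set (Sym2 Pt)).ncard :=
        Set.ncard_le_ncard_of_injOn _ hmaps (Sym2.map.injective Subtype.val_injective).injOn
          (Finset.finite_toSet _)
    _ ≤ T.card := by rw [Set.ncard_coe_finset]; exact card_image_le

lemma IsSpanningTreeLinks.not_connected_erase (hS : IsSpanningTreeLinks R S) {g : Link}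
    (hg : g ∈ S) : ¬ (linkGraph R (S.erase g)).Connected := fun hconn => by
  have hvert := hconn.card_vert_le_card_edgeSet_add_one
  have hedge := card_edgeSet_linkGraph_le R (S.erase g)
  rw [Nat.card_eq_fintype_card, Fintype.card_coe] at hvert
  rw [card_erase_of_mem hg] at hedge
  have hpos : 0 < S.card := card_pos.2 ⟨g, hg⟩
  have hcard := hS.2.1
  omega

lemma SimpleGraph.connected_of_reachable_or_reachable {V : Type*} {G : SimpleGraph V} {x y : V}
    (hxy : G.Reachable x y) (h : ∀ t, G.Reachable x t ∨ G.Reachable y t) : G.Connected := by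
  have hx : ∀ t, G.Reachable x t := fun t => (h t).elim id hxy.trans
  exact (connected_iff _).2 ⟨fun t t' => (hx t).symm.trans (hx t'), ⟨x⟩⟩

lemma reachable_or_reachable_erase (hconn : (linkGraph R S).Connected) {g : Link}
    {x y : {p : Pt // p ∈ R}} (hxy : g = (↑x, ↑y) ∨ g = (↑y, ↑x)) (t : {p : Pt // p ∈ R}) :
    (linkGraph R (S.erase g)).Reachable x t ∨ (linkGraph R (S.erase g)).Reachable y t := by
  have h := hconn.preconnected x t
  rw [reachable_iff_reflTransGen] at h
  induction h with
  | refl => exact Or.inl (Reachable.refl x)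
  | @tail b c _ hbc ih =>
    by_cases hc : c = x ∨ c = y
    · rcases hc with rfl | rfl
      exacts [Or.inl (Reachable.refl _), Or.inr (Reachable.refl _)]
    have hc' : (c : Pt) ≠ x ∧ (c : Pt) ≠ y :=
      ⟨fun h => hc (Or.inl (Subtype.ext h)), fun h => hc (Or.inr (Subtype.ext h))⟩
    have hcg : ∀ p : Pt, (p, (c : Pt)) ≠ g ∧ ((c : Pt), p) ≠ g := by
      intro p
      rcases hxy with rfl | rfl <;> refine ⟨fun h => ?_, fun h => ?_⟩ <;>
        simp only [Prod.mk.injEq] at h <;> tauto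
    obtain ⟨hne, hmem⟩ := linkGraph_adj.1 hbc
    have hadj : (linkGraph R (S.erase g)).Adj b c := linkGraph_adj.2
      ⟨hne, hmem.imp (fun h => mem_erase.2 ⟨(hcg _).1, h⟩) (fun h => mem_erase.2 ⟨(hcg _).2, h⟩)⟩
    exact ih.imp (·.trans hadj.reachable) (·.trans hadj.reachable)

lemma IsSpanningTreeLinks.mem_of_orient (hS : IsSpanningTreeLinks R S) {g : Link} (hg : g ∈ S)
    {x y : Pt} (hxy : g = (x, y) ∨ g = (y, x)) : x ∈ R ∧ y ∈ R ∧ x ≠ y := by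
  obtain ⟨hx, hy, hne⟩ := hS.1 g hg
  rcases hxy with rfl | rfl
  exacts [⟨hx, hy, hne⟩, ⟨hy, hx, hne.symm⟩]

/-- Exchange property: replacing `g` by the link `(w, y)` gives another spanning tree. -/
lemma IsMSTLinks.dist_le_of_reachable_erase (hMST : IsMSTLinks R S) {g : Link} (hg : g ∈ S)
    {x y w : {p : Pt // p ∈ R}} (hxy : g = (↑x, ↑y) ∨ g = (↑y, ↑x)) (hwy : w ≠ y)
    (hxw : (linkGraph R (S.erase g)).Reachable x w) : dist (x : Pt) y ≤ dist (w : Pt) y := by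
  obtain ⟨hS, hmin⟩ := hMST
  have hside := reachable_or_reachable_erase hS.2.2 hxy
  have hwy' : (w : Pt) ≠ y := fun h => hwy (Subtype.ext h)
  have hnotmem : ((w : Pt), (y : Pt)) ∉ S.erase g := fun hmem => by
    refine hS.not_connected_erase hg (connected_of_reachable_or_reachable ?_ hside)
    exact hxw.trans (linkGraph_adj.2 ⟨hwy, Or.inl hmem⟩).reachable
  set S' := insert ((w : Pt), (y : Pt)) (S.erase g)
  have hS' : IsSpanningTreeLinks R S' := by
    refine ⟨fun i hi => ?_, ?_, ?_⟩
    · rcases mem_insert.1 hi with rfl | hi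
      exacts [⟨w.2, y.2, hwy'⟩, hS.1 i (mem_of_mem_erase hi)]
    · have hpos : 0 < S.card := card_pos.2 ⟨g, hg⟩
      rw [card_insert_of_notMem hnotmem, card_erase_of_mem hg, ← hS.2.1]
      omega
    · have hmono := linkGraph_mono (R := R) (subset_insert ((w : Pt), (y : Pt)) (S.erase g))
      refine connected_of_reachable_or_reachable ?_ fun t =>
        (hside t).imp (·.mono hmono) (·.mono hmono)
      exact (hxw.mono hmono).trans (linkGraph_adj.2 ⟨hwy, Or.inl (mem_insert_self _ _)⟩).reachable
  have hlen : len g = dist (x : Pt) y := by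
    rcases hxy with rfl | rfl
    exacts [rfl, dist_comm _ _]
  have hsum := hmin S' hS'
  rw [sum_insert hnotmem, ← sum_erase_add _ _ hg, hlen] at hsum
  have : len ((w : Pt), (y : Pt)) = dist (w : Pt) y := rfl
  linarith

end SpanningTree

section MSTGeometry

variable {R : Finset Pt} {S : Finset Link}

lemma IsMSTLinks.dist_le_of_adjacent (hMST : IsMSTLinks R S) {f g : Link} (hf : f ∈ S)
    (hg : g ∈ S) (hfg : f ≠ g) {z c c' : Pt} (hfz : f = (z, c) ∨ f = (c, z))
    (hgz : g = (z, c') ∨ g = (c', z)) (hcc' : c ≠ c') : dist z c' ≤ dist c c' := by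
  obtain ⟨hz, hc, hzc⟩ := hMST.1.mem_of_orient hf hfz
  have hc' := (hMST.1.mem_of_orient hg hgz).2.1
  have hreach : (linkGraph R (S.erase g)).Reachable ⟨z, hz⟩ ⟨c, hc⟩ := by
    refine (linkGraph_adj.2 ⟨Subtype.coe_ne_coe.1 hzc, ?_⟩).reachable
    have hf' := mem_erase.2 ⟨hfg, hf⟩
    rcases hfz with rfl | rfl
    exacts [Or.inl hf', Or.inr hf']
  exact hMST.dist_le_of_reachable_erase (x := ⟨z, hz⟩) (y := ⟨c', hc'⟩) (w := ⟨c, hc⟩) hg hgz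
    (Subtype.coe_ne_coe.1 hcc') hreach

lemma IsMSTLinks.two_inner_le (hMST : IsMSTLinks R S) {f g : Link} (hf : f ∈ S) (hg : g ∈ S)
    (hfg : f ≠ g) {z c c' : Pt} (hfz : f = (z, c) ∨ f = (c, z))
    (hgz : g = (z, c') ∨ g = (c', z)) (hcc' : c ≠ c') :
    2 * ⟪c - z, c' - z⟫ ≤ ‖c - z‖ * ‖c' - z‖ := by
  have h₁ := hMST.dist_le_of_adjacent hf hg hfg hfz hgz hcc'
  have h₂ := hMST.dist_le_of_adjacent hg hf hfg.symm hgz hfz hcc'.symm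
  rw [dist_comm c' c] at h₂
  rw [dist_comm, dist_eq_norm, dist_eq_norm, ← sub_sub_sub_cancel_right c c' z] at h₁ h₂
  exact two_inner_le_mul_norm_of_le_norm_sub h₂ h₁

lemma IsMSTLinks.cut (hMST : IsMSTLinks R S) {f g : Link} (hf : f ∈ S) (hg : g ∈ S)
    {a b a' b' : Pt} (hfab : f = (a, b) ∨ f = (b, a)) (hgab : g = (a', b') ∨ g = (b', a'))
    (h₁ : a' ≠ a) (h₂ : a' ≠ b) (h₃ : b' ≠ a) (h₄ : b' ≠ b) :
    (dist a b ≤ dist a' b ∧ dist a b ≤ dist b' b) ∨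
      (dist a b ≤ dist a' a ∧ dist a b ≤ dist b' a) := by
  obtain ⟨ha, hb, -⟩ := hMST.1.mem_of_orient hf hfab
  obtain ⟨ha', hb', ha'b'⟩ := hMST.1.mem_of_orient hg hgab
  have hfg : g ≠ f := by
    rintro rfl
    rcases hfab with rfl | rfl <;> rcases hgab with h | h <;>
      simp only [Prod.mk.injEq] at h <;> tauto
  have hadj : (linkGraph R (S.erase f)).Adj ⟨a', ha'⟩ ⟨b', hb'⟩ := by
    refine linkGraph_adj.2 ⟨fun h => ha'b' (congrArg Subtype.val h), ?_⟩
    have hg' := mem_erase.2 ⟨hfg, hg⟩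
    rcases hgab with rfl | rfl
    exacts [Or.inl hg', Or.inr hg']
  rcases reachable_or_reachable_erase hMST.1.2.2 (x := ⟨a, ha⟩) (y := ⟨b, hb⟩) hfab ⟨a', ha'⟩
    with hr | hr
  · have e₁ := hMST.dist_le_of_reachable_erase (x := ⟨a, ha⟩) (y := ⟨b, hb⟩) (w := ⟨a', ha'⟩)
      hf hfab (Subtype.coe_ne_coe.1 h₂) hr
    have e₂ := hMST.dist_le_of_reachable_erase (x := ⟨a, ha⟩) (y := ⟨b, hb⟩) (w := ⟨b', hb'⟩)
      hf hfab (Subtype.coe_ne_coe.1 h₄) (hr.trans hadj.reachable)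
    exact Or.inl ⟨e₁, e₂⟩
  · have e₁ := hMST.dist_le_of_reachable_erase (x := ⟨b, hb⟩) (y := ⟨a, ha⟩) (w := ⟨a', ha'⟩)
      hf hfab.symm (Subtype.coe_ne_coe.1 h₁) hr
    have e₂ := hMST.dist_le_of_reachable_erase (x := ⟨b, hb⟩) (y := ⟨a, ha⟩) (w := ⟨b', hb'⟩)
      hf hfab.symm (Subtype.coe_ne_coe.1 h₃) (hr.trans hadj.reachable)
    rw [dist_comm b a] at e₁ e₂
    exact Or.inr ⟨e₁, e₂⟩

lemma IsMSTLinks.le_dist_stepToward_of_common_vertex (hMST : IsMSTLinks R S) (hf : f ∈ S)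
    (hg : g ∈ S) (hfab : f = (a, b) ∨ f = (b, a)) (hgab : g = (a', b') ∨ g = (b', a'))
    (hne : s(a, b) ≠ s(a', b')) {z c c' : Pt} (hz : (a = z ∧ b = c) ∨ (a = c ∧ b = z))
    (hz' : (a' = z ∧ b' = c') ∨ (a' = c' ∧ b' = z)) (hs : 0 < s) (hab : 2 * s ≤ dist a b)
    (ha'b' : 2 * s ≤ dist a' b') : s ≤ dist (stepToward a b s) (stepToward a' b' s) := by
  have hfz : f = (z, c) ∨ f = (c, z) := by
    rcases hz with ⟨rfl, rfl⟩ | ⟨rfl, rfl⟩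
    exacts [hfab, hfab.symm]
  have hgz : g = (z, c') ∨ g = (c', z) := by
    rcases hz' with ⟨rfl, rfl⟩ | ⟨rfl, rfl⟩
    exacts [hgab, hgab.symm]
  have hfg : f ≠ g := by
    rintro rfl
    exact hne ((sym2_eq_of_eq_or_eq_swap hfab).symm.trans (sym2_eq_of_eq_or_eq_swap hgab))
  have hcc' : c ≠ c' := by
    rintro rfl
    exact hne ((sym2_eq_of_eq_or_eq_swap hfab).symm.trans <| (sym2_eq_of_eq_or_eq_swap hfz).trans
      ((sym2_eq_of_eq_or_eq_swap hgz).symm.trans (sym2_eq_of_eq_or_eq_swap hgab)))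
  obtain ⟨t, ht, hpt, hps⟩ := exists_stepToward_sub_eq_smul hz hs hab
  obtain ⟨u, hu, hqu, hqs⟩ := exists_stepToward_sub_eq_smul hz' hs ha'b'
  rw [dist_eq_norm, ← sub_sub_sub_cancel_right _ _ z]
  refine le_norm_sub_of_two_inner_le ?_ hs.le hps hqs
  rw [hpt, hqu]
  exact two_inner_smul_le_of_two_inner_le (hMST.two_inner_le hf hg hfg hfz hgz hcc') ht hu

lemma IsMSTLinks.le_dist_stepToward_of_disjoint (hMST : IsMSTLinks R S) (hf : f ∈ S)
    (hg : g ∈ S) (hfab : f = (a, b) ∨ f = (b, a)) (hgab : g = (a', b') ∨ g = (b', a'))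
    (h₁ : a' ≠ a) (h₂ : a' ≠ b) (h₃ : b' ≠ a) (h₄ : b' ≠ b) (hs : 0 < s)
    (hab : 2 * s ≤ dist a b) (ha'b' : 2 * s ≤ dist a' b') :
    s / 4 ≤ dist (stepToward a b s) (stepToward a' b' s) := by
  have cutf := hMST.cut hf hg hfab hgab h₁ h₂ h₃ h₄
  have cutg := hMST.cut hg hf hgab hfab h₁.symm h₃.symm h₂.symm h₄.symm
  rw [dist_comm a b', dist_comm b b', dist_comm a a', dist_comm b a'] at cutg
  obtain ⟨w₁, l, hl, hw₁, rfl, hp⟩ := exists_stepToward_eq hs hab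
  obtain ⟨w₂, m, hm, hw₂, rfl, hq⟩ := exists_stepToward_eq hs ha'b'
  obtain ⟨d, rfl⟩ : ∃ d, a' = a + d := ⟨a' - a, by abel⟩
  have e₁ : dist a (a + l • w₁) = l * s := by
    rw [dist_self_add_right, norm_smul, Real.norm_of_nonneg (by linarith), hw₁]
  have e₂ : dist (a + d) (a + l • w₁) = ‖d - l • w₁‖ := by rw [dist_add_left, dist_eq_norm]
  have e₃ : dist (a + d + m • w₂) (a + l • w₁) = ‖d + m • w₂ - l • w₁‖ := by
    rw [add_assoc, dist_add_left, dist_eq_norm]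
  have e₄ : dist (a + d) a = ‖d‖ := dist_self_add_left _ _
  have e₅ : dist (a + d + m • w₂) a = ‖d + m • w₂‖ := by rw [add_assoc, dist_self_add_left]
  have e₆ : dist (a + d) (a + d + m • w₂) = m * s := by
    rw [dist_self_add_right, norm_smul, Real.norm_of_nonneg (by linarith), hw₂]
  rw [e₁, e₂, e₃, e₄, e₅] at cutf
  rw [e₂, e₃, e₄, e₅, e₆] at cutg
  rw [hp, hq, add_assoc, dist_add_left, dist_comm, dist_eq_norm]
  rcases cutf with ⟨cf₁, cf₂⟩ | ⟨cf₁, cf₂⟩ <;> rcases cutg with ⟨cg₁, cg₂⟩ | ⟨cg₁, cg₂⟩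
  · exact step_sep_aa hs hl hm hw₁ hw₂ cf₁ cg₁ cf₂ cg₂
  · exact step_sep_ab hs hl hm hw₁ hw₂ cf₁ cg₁
  · have := step_sep_ab (d := -d) hs hm hl hw₂ hw₁
      (by rwa [show -d - m • w₂ = -(d + m • w₂) by abel, norm_neg]) (by rwa [norm_neg])
    rwa [show -d + w₁ - w₂ = -(d + w₂ - w₁) by abel, norm_neg] at this
  · exact step_sep_bb hs hl hm hw₁ hw₂ cg₁ cf₂

lemma IsMSTLinks.le_dist_stepToward (hMST : IsMSTLinks R S) (hf : f ∈ S) (hg : g ∈ S)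
    (hfab : f = (a, b) ∨ f = (b, a)) (hgab : g = (a', b') ∨ g = (b', a'))
    (hne : s(a, b) ≠ s(a', b')) (hs : 0 < s) (hab : 2 * s ≤ dist a b)
    (ha'b' : 2 * s ≤ dist a' b') : s / 4 ≤ dist (stepToward a b s) (stepToward a' b' s) := by
  have common := fun {z c c' : Pt} (hz : (a = z ∧ b = c) ∨ (a = c ∧ b = z))
      (hz' : (a' = z ∧ b' = c') ∨ (a' = c' ∧ b' = z)) =>
    hMST.le_dist_stepToward_of_common_vertex hf hg hfab hgab hne hz hz' hs hab ha'b'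
  by_cases h₁ : a' = a
  · linarith [common (Or.inl ⟨rfl, rfl⟩) (Or.inl ⟨h₁, rfl⟩)]
  by_cases h₂ : a' = b
  · linarith [common (Or.inr ⟨rfl, rfl⟩) (Or.inl ⟨h₂, rfl⟩)]
  by_cases h₃ : b' = a
  · linarith [common (Or.inl ⟨rfl, rfl⟩) (Or.inr ⟨rfl, h₃⟩)]
  by_cases h₄ : b' = b
  · linarith [common (Or.inr ⟨rfl, rfl⟩) (Or.inr ⟨rfl, h₄⟩)]
  exact hMST.le_dist_stepToward_of_disjoint hf hg hfab hgab h₁ h₂ h₃ h₄ hs hab ha'b'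

end MSTGeometry

section Counting

variable {R : Finset Pt} {S : Finset Link}

def distLink (i : Link) (x : Pt) : ℝ := min (dist i.1 x) (dist i.2 x)

lemma dd_eq_min_distLink (i j : Link) : dd i j = min (distLink i j.1) (distLink i j.2) :=
  min_min_min_comm _ _ _ _

lemma distLink_le_dist_fst (i : Link) (x : Pt) : distLink i x ≤ dist i.1 x := min_le_left _ _

lemma dist_fst_le_distLink_add_len (i : Link) (x : Pt) : dist i.1 x ≤ distLink i x + len i := by
  have := dist_triangle i.1 i.2 x
  rcases min_choice (dist i.1 x) (dist i.2 x) with h | h <;>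
    rw [distLink, h, len] <;> linarith [dist_nonneg (x := i.1) (y := i.2)]

def orientNear (i j : Link) : Link := if distLink i j.1 ≤ distLink i j.2 then j else j.swap

lemma eq_orientNear_or (i j : Link) :
    j = ((orientNear i j).1, (orientNear i j).2) ∨
      j = ((orientNear i j).2, (orientNear i j).1) := by
  unfold orientNear
  split_ifs
  exacts [Or.inl rfl, Or.inr rfl]

lemma sym2_orientNear (i j : Link) : s((orientNear i j).1, (orientNear i j).2) = s(j.1, j.2) := by
  unfold orientNear
  split_ifs
  exacts [rfl, Sym2.eq_swap]

lemma dist_orientNear (i j : Link) : dist (orientNear i j).1 (orientNear i j).2 = len j := by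
  unfold orientNear
  split_ifs
  exacts [rfl, dist_comm _ _]

lemma dd_eq_distLink_orientNear (i j : Link) : dd i j = distLink i (orientNear i j).1 := by
  rw [dd_eq_min_distLink, orientNear]
  split_ifs with h
  exacts [min_eq_left h, min_eq_right (le_of_not_ge h)]

lemma dd_nonneg (i j : Link) : 0 ≤ dd i j := by
  unfold dd
  positivity

lemma ball_stepToward_orientNear_subset {i j : Link} {k : ℕ} (hℓ : 0 < len i)
    (hlen : len i ≤ len j) (hk₁ : k * len i ≤ dd i j) (hk₂ : dd i j < (k + 1) * len i) :
    ball (stepToward (orientNear i j).1 (orientNear i j).2 (len i / 2)) (len i / 16) ⊆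
      ball i.1 ((k + 3) * len i) \ ball i.1 (max ((k - 1) * len i) 0) := by
  set x := (orientNear i j).1
  set p := stepToward x (orientNear i j).2 (len i / 2)
  have hx₁ := distLink_le_dist_fst i x
  have hx₂ := dist_fst_le_distLink_add_len i x
  rw [← dd_eq_distLink_orientNear] at hx₁ hx₂
  have hpx : dist p x = len i / 2 :=
    dist_stepToward_left (by positivity) (by rw [dist_orientNear]; linarith)
  have hup := dist_triangle p x i.1
  have hlow := dist_triangle i.1 p x
  rw [dist_comm x i.1] at hup
  rw [dist_comm i.1 p] at hlow
  refine Set.subset_sdiff.2 ⟨ball_subset_ball' (by linarith), ?_⟩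
  rcases le_total ((k - 1) * len i) 0 with h | h
  · rw [max_eq_right h, ball_zero]
    exact Set.disjoint_empty _
  · rw [max_eq_left h]
    exact ball_disjoint_ball (by linarith)

lemma IsMSTLinks.card_le_of_injOn_sym2 (hMST : IsMSTLinks R S) {i : Link} (hi : i ∈ S) (k : ℕ)
    {T : Finset Link} (hTS : T ⊆ S) (hinj : Set.InjOn (fun j : Link => s(j.1, j.2)) T)
    (hT : ∀ j ∈ T, len i ≤ len j ∧ k * len i ≤ dd i j ∧ dd i j < (k + 1) * len i) :
    (T.card : ℝ) ≤ 2304 * (k + 1) := by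
  set ℓ := len i
  have hℓ : 0 < ℓ := dist_pos.2 (hMST.1.1 i hi).2.2
  have hlen : ∀ j ∈ T, 2 * (ℓ / 2) ≤ dist (orientNear i j).1 (orientNear i j).2 := fun j hj => by
    rw [dist_orientNear]; linarith [(hT j hj).1]
  have hdisj : (T : Set Link).PairwiseDisjoint fun j =>
      ball (stepToward (orientNear i j).1 (orientNear i j).2 (ℓ / 2)) (ℓ / 16) := by
    intro j hj j' hj' hne
    have hsep := hMST.le_dist_stepToward (hTS hj) (hTS hj') (eq_orientNear_or i j)
      (eq_orientNear_or i j') (by rw [sym2_orientNear, sym2_orientNear]; exact hinj.ne hj hj' hne)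
      (by positivity) (hlen j hj) (hlen j' hj')
    exact ball_disjoint_ball (by linarith)
  have hk : (0 : ℝ) ≤ k := k.cast_nonneg
  have hpack := card_mul_pow_le_of_pairwiseDisjoint_ball (by positivity) hdisj (le_max_right _ _)
    (max_le (by nlinarith) (by positivity))
    fun j hj => ball_stepToward_orientNear_subset hℓ (hT j hj).1 (hT j hj).2.1 (hT j hj).2.2
  rw [finrank_euclideanSpace_fin] at hpack
  have hannulus : ((k + 3) * ℓ) ^ 2 - (max ((k - 1) * ℓ) 0) ^ 2 ≤ 9 * (k + 1) * ℓ ^ 2 := by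
    rcases le_total ((k - 1) * ℓ) 0 with h | h
    · rw [max_eq_right h]
      nlinarith [mul_nonneg (mul_nonneg hk (sq_nonneg ℓ)) (by nlinarith : (0 : ℝ) ≤ 1 - k)]
    · rw [max_eq_left h]
      nlinarith [sq_nonneg ℓ]
  nlinarith [sq_nonneg ℓ, mul_pos hℓ hℓ]

lemma IsMSTLinks.card_le_of_dd_mem_Ico (hMST : IsMSTLinks R S) {i : Link} (hi : i ∈ S) (k : ℕ)
    {F : Finset Link} (hFS : F ⊆ S)
    (hF : ∀ j ∈ F, len i ≤ len j ∧ k * len i ≤ dd i j ∧ dd i j < (k + 1) * len i) :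
    (F.card : ℝ) ≤ 4608 * (k + 1) := by
  obtain ⟨T, hTF, hinj, himage⟩ := Finset.exists_subset_injOn_image_eq_of_surjOn
    (f := fun j : Link => s(j.1, j.2)) (F : Set Link) (F.image _)
    fun e he => by simpa using he
  have hcard : F.card ≤ 2 * T.card := by
    rw [← card_image_of_injOn hinj, himage]
    exact card_le_two_mul_card_image_sym2 F
  have hT := hMST.card_le_of_injOn_sym2 hi k (fun j hj => hFS (hTF hj)) hinj
    fun j hj => hF j (hTF hj)
  have hcard' : (F.card : ℝ) ≤ 2 * T.card := by exact_mod_cast hcard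
  linarith

end Counting

/-- (MST sparsity.) There is a constant `C` depending only on `α > 2` such
that in any arbitrarily-oriented MST `S` of a planar pointset, the capped interference on any
link from the not-shorter links of `S` is at most `C`. -/
theorem mst_sparsity (α : ℝ) (hα : 2 < α) :
    ∃ C : ℝ, ∀ R : Finset Pt, 2 ≤ R.card →
      ∀ S : Finset Link, IsMSTLinks R S →
        ∀ i ∈ S,
          ∑ j ∈ S.filter (fun j => j ≠ i ∧ len i ≤ len j),
            min 1 (len i ^ α / dd i j ^ α) ≤ C := by
  refine ⟨∑' k : ℕ, 4608 * ((k : ℝ) + 1) * max 1 (k : ℝ) ^ (-α), fun R _ S hMST i hi => ?_⟩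
  have hℓ : 0 < len i := dist_pos.2 (hMST.1.1 i hi).2.2
  refine sum_le_tsum_of_card_fiber_le _ (fun j => ⌊dd i j / len i⌋₊) _ (fun k => by positivity)
    (fun j _ => min_one_rpow_div_rpow_le hℓ (dd_nonneg i j) (by linarith)) (fun k => ?_)
    (by simpa only [mul_assoc] using (summable_succ_mul_max_one_rpow_neg hα).mul_left 4608)
  refine hMST.card_le_of_dd_mem_Ico hi k (fun j hj => (mem_filter.1 (mem_filter.1 hj).1).1)
    fun j hj => ?_
  obtain ⟨⟨-, -, hlen⟩, hk⟩ := And.imp_left mem_filter.1 (mem_filter.1 hj)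
  obtain ⟨hk₁, hk₂⟩ := (Nat.floor_eq_iff (div_nonneg (dd_nonneg i j) hℓ.le)).1 hk
  exact ⟨hlen, (le_div_iff₀ hℓ).1 hk₁, (div_lt_iff₀ hℓ).1 hk₂⟩
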